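/- arXiv:2307.00912 — 5 statements merged into one kernel-verified Lean document; each statement's English description precedes it below -/
import Mathlib

section
/- Every strongly connected finite tournament on at least 3 vertices contains a directed Hamilton cycle. -/
/-!
Grow a directed cycle `C` until it is spanning (Moon's argument). If some vertex `w` outside `C`
has both an in-neighbour and an out-neighbour on `C`, then walking along `C` from an in-neighbour
we meet consecutive vertices `a → b` with `a → w → b`, and `w` can be inserted between them.
Otherwise every outside vertex either beats all of `C` or is beaten by all of `C`; strong
connectivity then yields an edge `b → a` from a vertex beaten by `C` to one beating `C`, and
`C, b, a` is a longer cycle. Started from a single vertex, the second step produces a 3-cycle.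
-/

def IsTournament {V : Type*} (T : V → V → Prop) : Prop :=
  (∀ v, ¬ T v v) ∧ ∀ u v : V, u ≠ v → (T u v ↔ ¬ T v u)

theorem Relation.ReflTransGen.exists_rel_of_pred_of_not_pred {α : Type*} {r : α → α → Prop}
    {S : α → Prop} {a b : α} (h : Relation.ReflTransGen r a b) (ha : S a) (hb : ¬ S b) :
    ∃ u v, S u ∧ ¬ S v ∧ r u v := by
  induction h with
  | refl => exact absurd ha hb
  | @tail c d _ hcd ih =>
    by_cases hc : S c
    · exact ⟨c, d, hc, hb, hcd⟩
    · exact ih hc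

theorem Cycle.chain_coe_iff_of_ne_nil {α : Type*} {r : α → α → Prop} {l : List α}
    (hl : l ≠ []) :
    (l : Cycle α).Chain r ↔ l.IsChain r ∧ r (l.getLast hl) (l.head hl) := by
  rw [Cycle.chain_ne_nil r hl]
  obtain ⟨x, l, rfl⟩ := List.exists_cons_of_ne_nil hl
  rw [List.isChain_cons_cons, and_comm]
  rfl

namespace IsTournament

variable {V : Type*} {T : V → V → Prop}

theorem asymm (hT : IsTournament T) {u v : V} (h : T u v) : ¬ T v u := by
  have hne : u ≠ v := by rintro rfl; exact hT.1 u h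
  exact (hT.2 u v hne).1 h

theorem rel_of_not_rel (hT : IsTournament T) {u v : V} (hne : u ≠ v) (h : ¬ T u v) : T v u :=
  not_not.1 (mt (hT.2 u v hne).2 h)

end IsTournament

section HamiltonCycle

variable {V : Type*} {T : V → V → Prop}

def IsDirCycle (T : V → V → Prop) (c : List V) : Prop :=
  c.Nodup ∧ (c : Cycle V).Chain T

theorem IsTournament.exists_insert_of_head (hT : IsTournament T) {x w y : V} {l : List V}
    (hc : ((x :: l : List V) : Cycle V).Chain T) (hw : w ∉ x :: l) (hxw : T x w)
    (hy : y ∈ x :: l) (hwy : T w y) :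
    ∃ c : List V, c.Perm (w :: x :: l) ∧ (c : Cycle V).Chain T := by
  -- `T · w` holds at `x` but not at `y`, so it fails right after some `a` with `T a w`.
  have hjump : ¬ (x :: l).IsChain (fun a b => T a w → T b w) := fun h =>
    hT.asymm hwy (h.induction (T · w) _ (fun _ _ h => h) (fun _ => hxw) y hy)
  simp only [List.isChain_iff_forall_rel_of_append_cons_cons, not_forall] at hjump
  obtain ⟨a, b, l₁, l₂, hsplit, haw, hbw⟩ := hjump
  rw [hsplit] at hc hw ⊢
  have hwb : T w b := hT.rel_of_not_rel (fun h => hw (h ▸ by simp)) hbw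
  have hperm : (l₁ ++ a :: w :: b :: l₂).Perm (w :: (l₁ ++ a :: b :: l₂)) := by
    simpa using List.perm_middle (l₁ := l₁ ++ [a])
  refine ⟨_, hperm, ?_⟩
  rw [Cycle.chain_ne_nil _ (by simp)] at hc ⊢
  simp only [List.getLast_append_of_ne_nil, List.getLast_cons, List.isChain_cons_append_cons_cons,
    List.isChain_cons_cons, ne_eq, reduceCtorEq, not_false_eq_true] at hc ⊢
  exact ⟨hc.1, haw, hwb, hc.2.2⟩

theorem IsTournament.exists_insert (hT : IsTournament T) {c : List V}
    (hc : (c : Cycle V).Chain T) {w x y : V} (hw : w ∉ c) (hx : x ∈ c) (hxw : T x w)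
    (hy : y ∈ c) (hwy : T w y) :
    ∃ c' : List V, c'.Perm (w :: c) ∧ (c' : Cycle V).Chain T := by
  obtain ⟨l₁, l₂, rfl⟩ := List.append_of_mem hx
  have hrot : (l₁ ++ x :: l₂) ~r (x :: (l₂ ++ l₁)) := by
    simpa using List.isRotated_append (l := l₁) (l' := x :: l₂)
  rw [Cycle.coe_eq_coe.2 hrot] at hc
  obtain ⟨c', hperm, hc'⟩ := hT.exists_insert_of_head hc (mt hrot.perm.mem_iff.2 hw) hxw
    (hrot.perm.mem_iff.1 hy) hwy
  exact ⟨c', hperm.trans (hrot.perm.cons w).symm, hc'⟩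

theorem IsTournament.exists_rel_dominated_dominating (hT : IsTournament T)
    (hsc : ∀ x y : V, Relation.ReflTransGen T x y) {c : List V} (hne : c ≠ [])
    (hsplit : ∀ w ∉ c, (∀ x ∈ c, T x w) ∨ ∀ x ∈ c, T w x) {v : V} (hv : v ∉ c) :
    ∃ b a, (∀ x ∈ c, T x b) ∧ (∀ x ∈ c, T a x) ∧ T b a := by
  obtain ⟨x₀, hx₀⟩ := List.exists_mem_of_ne_nil c hne
  -- A path from `v` to `c` (resp. from `c` to `v`) leaves the vertices beaten by `c`
  -- (resp. enters those beating `c`) along such an edge.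
  rcases hsplit v hv with hdom | hdom
  · obtain ⟨b, a, hb, ha, hba⟩ :=
      (hsc v x₀).exists_rel_of_pred_of_not_pred (S := fun u => ∀ x ∈ c, T x u) hdom
        (fun h => hT.1 x₀ (h x₀ hx₀))
    have hac : a ∉ c := fun h => hT.asymm hba (hb a h)
    exact ⟨b, a, hb, (hsplit a hac).resolve_left ha, hba⟩
  · obtain ⟨b, a, hb, ha, hba⟩ :=
      (hsc x₀ v).exists_rel_of_pred_of_not_pred (S := fun u => ¬ ∀ x ∈ c, T u x)
        (fun h => hT.1 x₀ (h x₀ hx₀)) (not_not.2 hdom)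
    rw [not_not] at ha
    have hbc : b ∉ c := fun h => hT.asymm hba (ha b h)
    exact ⟨b, a, (hsplit b hbc).resolve_right hb, ha, hba⟩

theorem IsTournament.isDirCycle_append_pair (hT : IsTournament T) {c : List V} (hne : c ≠ [])
    (hnd : c.Nodup) (hchain : c.IsChain T) {b a : V} (hb : ∀ x ∈ c, T x b)
    (ha : ∀ x ∈ c, T a x) (hba : T b a) : IsDirCycle T (c ++ [b, a]) := by
  have hbc : b ∉ c := fun h => hT.1 b (hb b h)
  have hac : a ∉ c := fun h => hT.1 a (ha a h)
  have hab : b ≠ a := fun h => hT.1 b (h ▸ hba)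
  refine ⟨?_, (Cycle.chain_coe_iff_of_ne_nil (by simp)).2 ⟨?_, ?_⟩⟩
  · exact List.perm_append_comm.nodup_iff.2 (by simp [hnd, hbc, hac, hab])
  · rw [List.isChain_append]
    simp [hchain, hba, List.getLast?_eq_some_getLast hne, hb _ (List.getLast_mem hne)]
  · simpa [List.head_append_of_ne_nil hne] using ha _ (List.head_mem hne)

theorem IsDirCycle.exists_longer (hT : IsTournament T)
    (hsc : ∀ x y : V, Relation.ReflTransGen T x y) {c : List V} (hc : IsDirCycle T c)
    (hne : c ≠ []) {v : V} (hv : v ∉ c) :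
    ∃ c' : List V, IsDirCycle T c' ∧ c.length < c'.length := by
  by_cases hins : ∃ w ∉ c, (∃ x ∈ c, T x w) ∧ ∃ y ∈ c, T w y
  · obtain ⟨w, hw, ⟨x, hx, hxw⟩, y, hy, hwy⟩ := hins
    obtain ⟨c', hperm, hc'⟩ := hT.exists_insert hc.2 hw hx hxw hy hwy
    refine ⟨c', ⟨hperm.nodup_iff.2 (List.nodup_cons.2 ⟨hw, hc.1⟩), hc'⟩, ?_⟩
    simp [hperm.length_eq]
  · have hsplit : ∀ w ∉ c, (∀ x ∈ c, T x w) ∨ ∀ x ∈ c, T w x := by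
      intro w hw
      by_cases hin : ∃ x ∈ c, T x w
      · exact .inl fun y hy =>
          hT.rel_of_not_rel (fun h => hw (h ▸ hy)) fun hwy => hins ⟨w, hw, hin, y, hy, hwy⟩
      · exact .inr fun x hx =>
          hT.rel_of_not_rel (fun h => hw (h ▸ hx)) fun h => hin ⟨x, hx, h⟩
    obtain ⟨b, a, hb, ha, hba⟩ := hT.exists_rel_dominated_dominating hsc hne hsplit hv
    have hchain := ((Cycle.chain_coe_iff_of_ne_nil hne).1 hc.2).1
    exact ⟨_, hT.isDirCycle_append_pair hne hc.1 hchain hb ha hba, by simp⟩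

theorem IsTournament.exists_isDirCycle (hT : IsTournament T)
    (hsc : ∀ x y : V, Relation.ReflTransGen T x y) {u v : V} (huv : u ≠ v) :
    ∃ c : List V, IsDirCycle T c ∧ c ≠ [] := by
  have hsplit : ∀ w ∉ [u], (∀ x ∈ [u], T x w) ∨ ∀ x ∈ [u], T w x := by
    intro w hw
    rw [List.mem_singleton] at hw
    by_cases huw : T u w
    · exact .inl (by simpa using huw)
    · exact .inr (by simpa using hT.rel_of_not_rel (Ne.symm hw) huw)
  obtain ⟨b, a, hb, ha, hba⟩ := hT.exists_rel_dominated_dominating hsc (List.cons_ne_nil u [])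
    hsplit (v := v) (by simpa using huv.symm)
  exact ⟨_, hT.isDirCycle_append_pair (List.cons_ne_nil u []) (List.nodup_singleton u)
    (List.isChain_singleton u) hb ha hba, by simp⟩

theorem IsDirCycle.exists_spanning [Fintype V] (hT : IsTournament T)
    (hsc : ∀ x y : V, Relation.ReflTransGen T x y) {c : List V} (hc : IsDirCycle T c)
    (hne : c ≠ []) : ∃ c' : List V, IsDirCycle T c' ∧ ∀ v, v ∈ c' := by
  by_cases hall : ∀ v, v ∈ c
  · exact ⟨c, hc, hall⟩
  obtain ⟨v, hv⟩ := not_forall.1 hall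
  obtain ⟨c', hc', hlen⟩ := hc.exists_longer hT hsc hne hv
  have : c'.length ≤ Fintype.card V := hc'.1.length_le_card
  exact hc'.exists_spanning hT hsc (List.ne_nil_of_length_pos (by omega))
termination_by Fintype.card V - c.length

end HamiltonCycle

/-- Every strongly connected finite tournament on at least 3 vertices contains
a directed Hamilton cycle. -/
theorem stmt1 {V : Type*} [Fintype V] (T : V → V → Prop) (hT : IsTournament T)
    (hcard : 3 ≤ Fintype.card V)
    (hsc : ∀ x y : V, Relation.ReflTransGen T x y) :
    ∃ p : List V, p.Nodup ∧ (∀ v : V, v ∈ p) ∧ p.Chain' T ∧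
      ∀ h : p ≠ [], T (p.getLast h) (p.head h) := by
  obtain ⟨u, v, huv⟩ := Fintype.exists_pair_of_one_lt_card (by omega : 1 < Fintype.card V)
  obtain ⟨c, hc, hne⟩ := hT.exists_isDirCycle hsc huv
  obtain ⟨p, hp, hall⟩ := hc.exists_spanning hT hsc hne
  have hp_ne : p ≠ [] := List.ne_nil_of_mem (hall u)
  obtain ⟨hchain, hclose⟩ := (Cycle.chain_coe_iff_of_ne_nil hp_ne).1 hp.2
  exact ⟨p, hp.1, hall, hchain, fun _ => hclose⟩
end

section
/- Let T = (T_1, …, T_n) be a collection of n tournaments on a common vertex set of size n. Then T contains a rainbow Hamilton path, i.e., a Hamilton path v_1 → v_2 → ⋯ → v_n together with an injection φ from its arcs to [n] such that each arc v_i → v_{i+1} is an arc of T_{φ(v_i → v_{i+1})}. -/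
theorem IsTournament.of_not_rel {V : Type*} {T : V → V → Prop} (hT : IsTournament T)
    {u v : V} (huv : u ≠ v) (h : ¬ T u v) : T v u :=
  (hT.2 v u huv.symm).mpr h

theorem List.exists_pair_notMem_of_length_add_two_le {ι : Type*} [Fintype ι] {cs : List ι}
    (h : cs.length + 2 ≤ Fintype.card ι) : ∃ a b, a ≠ b ∧ a ∉ cs ∧ b ∉ cs := by
  classical
  have hcard : 1 < cs.toFinsetᶜ.card := by
    rw [Finset.card_compl]
    have := cs.toFinset_card_le
    omega
  obtain ⟨a, ha, b, hb, hab⟩ := Finset.one_lt_card.mp hcard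
  exact ⟨a, b, hab, by simpa using ha, by simpa using hb⟩

section Insertion

variable {V ι : Type*} {T : ι → V → V → Prop}

inductive ColoredPath (T : ι → V → V → Prop) : List V → List ι → Prop
  | nil : ColoredPath T [] []
  | single (v : V) : ColoredPath T [v] []
  | cons {u v : V} {c : ι} {p : List V} {cs : List ι} :
      T c u v → ColoredPath T (v :: p) cs → ColoredPath T (u :: v :: p) (c :: cs)

namespace ColoredPath

theorem length_eq {p : List V} {cs : List ι} (h : ColoredPath T p cs) :
    cs.length = p.length - 1 := by
  induction h with
  | nil | single => rfl
  | cons _ _ ih => simp only [List.length_cons] at ih ⊢; omega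

theorem rel_of_getElem? {p : List V} {cs : List ι} (h : ColoredPath T p cs) (k : ℕ) :
    ∀ c ∈ cs[k]?, ∀ u ∈ p[k]?, ∀ w ∈ p[k + 1]?, T c u w := by
  induction h generalizing k with
  | nil | single => simp
  | cons harc _ ih =>
    cases k with
    | zero => simpa using harc
    | succ k => simpa using ih k

variable (hT : ∀ c, IsTournament (T c)) {a b : ι} (hab : a ≠ b) {v : V}
include hT hab

theorem exists_insert_after {u : V} {p : List V} {cs : List ι} :
    ColoredPath T (u :: p) cs → v ∉ u :: p → cs.Nodup → a ∉ cs → b ∉ cs →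
    T a u v → T b u v → ∃ q cs', ColoredPath T (u :: q) cs' ∧ q.Perm (v :: p) ∧
      cs'.Nodup ∧ cs' ⊆ a :: b :: cs := by
  induction p generalizing u cs with
  | nil =>
    intro _ _ _ _ _ hua _
    exact ⟨[v], [a], .cons hua (.single v), .refl _, by simp, by simp⟩
  | cons w p ih =>
    intro h hv hcs ha hb hua hub
    rcases h with _ | _ | @⟨_, _, d, _, cs, hd, hp⟩
    simp only [List.mem_cons, not_or] at hv ha hb
    simp only [List.nodup_cons] at hcs
    by_cases hva : T a v w
    · refine ⟨v :: w :: p, b :: a :: cs, .cons hub (.cons hva hp), .refl _, ?_, ?_⟩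
      · simp [Ne.symm hab, ha.2, hb.2, hcs.2]
      · intro c; simp only [List.mem_cons]; tauto
    by_cases hvb : T b v w
    · refine ⟨v :: w :: p, a :: b :: cs, .cons hua (.cons hvb hp), .refl _, ?_, ?_⟩
      · simp [hab, ha.2, hb.2, hcs.2]
      · intro c; simp only [List.mem_cons]; tauto
    obtain ⟨q, cs', hq, hperm, hcs', hsub⟩ :=
      ih hp (by simp [hv.2.1, hv.2.2]) hcs.2 ha.2 hb.2
        ((hT a).of_not_rel hv.2.1 hva) ((hT b).of_not_rel hv.2.1 hvb)
    refine ⟨w :: q, d :: cs', .cons hd hq, (hperm.cons w).trans (.swap v w p), ?_, ?_⟩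
    · refine List.nodup_cons.mpr ⟨fun hdcs => ?_, hcs'⟩
      have := hsub hdcs
      simp only [List.mem_cons] at this
      rcases this with rfl | rfl | hdcs
      exacts [ha.1 rfl, hb.1 rfl, hcs.1 hdcs]
    · refine List.Subset.trans (List.cons_subset_cons _ hsub) fun c => ?_
      simp only [List.mem_cons]
      tauto

theorem exists_insert {p : List V} {cs : List ι} (h : ColoredPath T p cs) (hv : v ∉ p)
    (hcs : cs.Nodup) (ha : a ∉ cs) (hb : b ∉ cs) :
    ∃ q cs', ColoredPath T q cs' ∧ q.Perm (v :: p) ∧ cs'.Nodup := by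
  cases p with
  | nil => exact ⟨[v], [], .single v, .refl _, List.nodup_nil⟩
  | cons u p =>
    have huv : u ≠ v := fun huv => hv (by simp [huv])
    by_cases hva : T a v u
    · exact ⟨v :: u :: p, a :: cs, .cons hva h, .refl _, List.nodup_cons.mpr ⟨ha, hcs⟩⟩
    by_cases hvb : T b v u
    · exact ⟨v :: u :: p, b :: cs, .cons hvb h, .refl _, List.nodup_cons.mpr ⟨hb, hcs⟩⟩
    obtain ⟨q, cs', hq, hperm, hcs', -⟩ := exists_insert_after hT hab h hv hcs ha hb
      ((hT a).of_not_rel huv.symm hva) ((hT b).of_not_rel huv.symm hvb)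
    exact ⟨u :: q, cs', hq, (hperm.cons u).trans (.swap v u p), hcs'⟩

end ColoredPath

theorem exists_coloredPath_perm [Fintype ι] (hT : ∀ c, IsTournament (T c)) {l : List V}
    (hl : l.Nodup) (hlen : l.length ≤ Fintype.card ι) :
    ∃ p cs, ColoredPath T p cs ∧ p.Perm l ∧ cs.Nodup := by
  induction l with
  | nil => exact ⟨[], [], .nil, .refl _, List.nodup_nil⟩
  | cons v l ih =>
    rw [List.nodup_cons] at hl
    rw [List.length_cons] at hlen
    obtain ⟨p, cs, hp, hperm, hcs⟩ := ih hl.2 (by omega)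
    by_cases hl0 : l = []
    · subst hl0
      exact ⟨[v], [], .single v, .refl _, List.nodup_nil⟩
    obtain ⟨a, b, hab, ha, hb⟩ := List.exists_pair_notMem_of_length_add_two_le (cs := cs)
      (by rw [hp.length_eq, hperm.length_eq]; have := List.length_pos_of_ne_nil hl0; omega)
    obtain ⟨q, cs', hq, hqperm, hcs'⟩ :=
      hp.exists_insert hT hab (fun hvp => hl.1 (hperm.mem_iff.mp hvp)) hcs ha hb
    exact ⟨q, cs', hq, hqperm.trans (hperm.cons v), hcs'⟩

end Insertion

theorem stmt9_general {V : Type*} [Fintype V] {n : ℕ}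
    (hn : Fintype.card V = n)
    (T : Fin n → V → V → Prop) (hT : ∀ c, IsTournament (T c)) :
    ∃ (p : List V) (cs : List (Fin n)),
      p.Nodup ∧ (∀ v : V, v ∈ p) ∧ p.length = n ∧
      cs.Nodup ∧ cs.length = n - 1 ∧
      ∀ k : ℕ, ∀ c ∈ cs[k]?, ∀ u ∈ p[k]?, ∀ w ∈ p[k + 1]?, T c u w := by
  have huniv := (Finset.univ : Finset V).nodup_toList
  obtain ⟨p, cs, hp, hperm, hcs⟩ := exists_coloredPath_perm hT huniv (by simp [hn])
  have hlen : p.length = n := by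
    rw [hperm.length_eq, Finset.length_toList, Finset.card_univ, hn]
  exact ⟨p, cs, hperm.nodup_iff.mpr huniv, fun v => hperm.mem_iff.mpr (by simp), hlen, hcs,
    by rw [hp.length_eq, hlen], hp.rel_of_getElem?⟩

/-- Any collection of `n` tournaments on a common `n`-vertex set contains a
rainbow Hamilton path: a Hamilton path `p` with pairwise distinct colors
`cs` (one per arc) such that each arc lies in the tournament of its color. -/
theorem stmt9 {V : Type*} [Fintype V] [DecidableEq V] {n : ℕ}
    (hn : Fintype.card V = n)
    (T : Fin n → V → V → Prop) (hT : ∀ c, IsTournament (T c)) :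
    ∃ (p : List V) (cs : List (Fin n)),
      p.Nodup ∧ (∀ v : V, v ∈ p) ∧ p.length = n ∧
      cs.Nodup ∧ cs.length = n - 1 ∧
      ∀ k : ℕ, ∀ c ∈ cs[k]?, ∀ u ∈ p[k]?, ∀ w ∈ p[k + 1]?, T c u w :=
  stmt9_general hn T hT
end

section
/- For every n ≥ 3, there exists a collection T = (T_1, …, T_n) of tournaments on vertex set [n] such that T_3, …, T_n are strongly connected and T contains no rainbow Hamilton cycle. Concretely, let T_1 = T_2 be the transitive tournament with arcs i→j for all 1 ≤ i < j ≤ n, and let T_3 = ⋯ = T_n be the tournament with arcs i→j for all i+2 ≤ j and arcs j→i for all j = i+1; then T has no rainbow Hamilton cycle. -/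
/-!
Every arc of `BackT` either ascends or descends by exactly one, and so does every arc of the
transitive tournament. Along a Hamilton cycle with this property, walk backwards from the vertex
`0`: its predecessor cannot be smaller, so it is `1`; the predecessor of `1` is `2`, since `0` is
already used; and so on. Hence the cycle is `n-1 → n-2 → ⋯ → 0 → n-1` and has a single ascending
arc, whereas the two transitive colours each need one.
-/

def TransT (n : ℕ) (i j : Fin n) : Prop := i < j

def BackT (n : ℕ) (i j : Fin n) : Prop := (i : ℕ) + 2 ≤ (j : ℕ) ∨ (j : ℕ) + 1 = (i : ℕ)

/-- The collection `(T_1, …, T_n)` with `T_1 = T_2` transitive and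
`T_3 = ⋯ = T_n = BackT` (colors `0,1` transitive, colors `≥ 2` BackT). -/
def Coll (n : ℕ) (c : Fin n) : Fin n → Fin n → Prop :=
  if (c : ℕ) < 2 then TransT n else BackT n

open Fin.NatCast Fin.CommRing Relation

theorem Nat.eq_self_of_injOn_of_lt_or_eq_succ {N : ℕ} {g : ℕ → ℕ}
    (hinj : Set.InjOn g (Set.Iio N)) (h0 : g 0 = 0)
    (hstep : ∀ k, k + 1 < N → g (k + 1) < g k ∨ g (k + 1) = g k + 1) :
    ∀ k < N, g k = k := by
  intro k
  induction k using Nat.strong_induction_on with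
  | _ k ih =>
    intro hk
    rcases k with _ | k
    · exact h0
    have hgk : g k = k := ih k (by omega) (by omega)
    rcases hstep k hk with hlt | hsucc
    · -- `g (k + 1) < k` is a fixed point of `g`, so injectivity forces `g (k + 1) = k + 1`
      have hfix : g (g (k + 1)) = g (k + 1) := ih _ (by omega) (by omega)
      have := hinj (show g (k + 1) ∈ Set.Iio N by simp; omega) (show k + 1 ∈ Set.Iio N from hk) hfix
      omega
    · omega

section CyclicArrangement

variable {n : ℕ} [NeZero n] {e : Fin n ≃ Fin n}

theorem Fin.natCast_injOn_Iio : Set.InjOn (fun k : ℕ => (k : Fin n)) (Set.Iio n) := by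
  intro a ha b hb hab
  simpa [Fin.val_cast_of_lt ha, Fin.val_cast_of_lt hb] using congrArg Fin.val hab

theorem Equiv.eq_symm_zero_sub_of_ascend_or_drop_one
    (h : ∀ i, (e i : ℕ) < e (i + 1) ∨ (e (i + 1) : ℕ) + 1 = e i) (i : Fin n) :
    e i = e.symm 0 - i := by
  set g : ℕ → ℕ := fun k => e (e.symm 0 - k)
  have hg : ∀ k < n, g k = k := by
    refine Nat.eq_self_of_injOn_of_lt_or_eq_succ ?_ (by simp [g]) fun k _ => ?_
    · intro a ha b hb hab
      exact Fin.natCast_injOn_Iio ha hb (sub_right_injective (e.injective (Fin.ext hab)))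
    · have hsucc : e.symm 0 - (k + 1 : ℕ) + 1 = e.symm 0 - k := by push_cast; ring
      have := h (e.symm 0 - (k + 1 : ℕ))
      rw [hsucc] at this
      simp only [g]
      omega
  have hi : e.symm 0 - ((e.symm 0 - i : Fin n) : ℕ) = i := by simp
  apply Fin.ext
  conv_lhs => rw [← hi]
  exact hg _ (e.symm 0 - i).isLt

theorem Equiv.eq_symm_zero_of_ascend_or_drop_one
    (h : ∀ i, (e i : ℕ) < e (i + 1) ∨ (e (i + 1) : ℕ) + 1 = e i) {i : Fin n}
    (hi : e i < e (i + 1)) : i = e.symm 0 := by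
  rw [Equiv.eq_symm_zero_sub_of_ascend_or_drop_one h, Equiv.eq_symm_zero_sub_of_ascend_or_drop_one h,
    ← sub_sub] at hi
  by_contra hne
  have hne' : e.symm 0 - i ≠ 0 := sub_ne_zero.mpr (Ne.symm hne)
  have := Fin.val_sub_one_of_ne_zero hne'
  have := (Fin.pos_iff_ne_zero' _).mpr hne'
  rw [Fin.lt_def] at hi this
  omega

end CyclicArrangement

variable {n : ℕ}

theorem Coll.lt_or_eq_add_one {c x y : Fin n} (h : Coll n c x y) :
    (x : ℕ) < y ∨ (y : ℕ) + 1 = x := by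
  unfold Coll TransT BackT at h
  split_ifs at h with hc
  · exact Or.inl h
  · omega

theorem Coll.lt_of_lt_two {c x y : Fin n} (hc : (c : ℕ) < 2) (h : Coll n c x y) : x < y := by
  simpa [Coll, TransT, hc] using h

theorem BackT.reflTransGen (hn : 3 ≤ n) (x y : Fin n) : ReflTransGen (BackT n) x y := by
  obtain ⟨m, rfl⟩ : ∃ m, n = m + 1 := ⟨n - 1, by omega⟩
  have to_zero : ∀ x : Fin (m + 1), ReflTransGen (BackT (m + 1)) x 0 :=
    Fin.induction .refl fun x hx => .head (Or.inr (by simp)) hx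
  have from_zero : ReflTransGen (BackT (m + 1)) 0 y := by
    rcases Nat.lt_trichotomy y 1 with hy | hy | hy
    · rw [show y = 0 from Fin.ext (by simpa using hy)]
    · exact .head (b := ⟨2, by omega⟩) (Or.inl (by simp)) (.single (Or.inr (by simp [hy])))
    · exact .single (Or.inl (by simp; omega))
  exact (to_zero x).trans from_zero

/-- For `n ≥ 3`, in the collection `Coll n` the tournaments `T_3, …, T_n` are
strongly connected, yet the collection has no rainbow Hamilton cycle: there is
no cyclic Hamilton arrangement `e` with a bijective coloring `φ` of its `n`
arcs by the `n` colors such that each arc lies in the tournament of its color. -/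
theorem stmt12 (n : ℕ) [NeZero n] (hn : 3 ≤ n) :
    (∀ c : Fin n, 2 ≤ (c : ℕ) →
      ∀ x y : Fin n, Relation.ReflTransGen (Coll n c) x y) ∧
    ¬ ∃ (e : Fin n ≃ Fin n) (φ : Fin n ≃ Fin n),
        ∀ i : Fin n, Coll n (φ i) (e i) (e (i + 1)) := by
  refine ⟨fun c hc x y => ?_, fun ⟨e, φ, h⟩ => ?_⟩
  · rw [Coll, if_neg (by omega)]
    exact BackT.reflTransGen hn x y
  · have hstep i := (h i).lt_or_eq_add_one
    have ascent (c : Fin n) (hc : (c : ℕ) < 2) : φ.symm c = e.symm 0 := by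
      refine Equiv.eq_symm_zero_of_ascend_or_drop_one hstep (Coll.lt_of_lt_two hc ?_)
      simpa using h (φ.symm c)
    have hone : ((1 : Fin n) : ℕ) < 2 := by simp [Nat.mod_eq_of_lt (show 1 < n by omega)]
    have := φ.symm.injective ((ascent 0 (by simp)).trans (ascent 1 hone).symm)
    exact absurd (Fin.zero_eq_one_iff.mp this) (by omega)
end

section
/- Let T = (T_1, …, T_m) be a collection of strongly connected tournaments on a common vertex set V with m ≥ |V| - 1 ≥ 1. Then for every ordered pair of distinct vertices x, y ∈ V, there exists a rainbow directed path from x to y, i.e., a directed path whose arcs can be assigned pairwise distinct colors from [m] with each arc lying in the tournament of its color. -/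
theorem Relation.ReflTransGen.exists_arc_into {α : Type*} {r : α → α → Prop} {P : α → Prop}
    {a b : α} (h : Relation.ReflTransGen r a b) (ha : ¬ P a) (hb : P b) :
    ∃ u v, ¬ P u ∧ P v ∧ r u v := by
  induction h with
  | refl => exact absurd hb ha
  | @tail u v _ huv ih =>
    by_cases hu : P u
    · exact ih hu
    · exact ⟨u, v, hu, hb, huv⟩

section RainbowPath

variable {V ι : Type*}

def RainbowPathIn (T : ι → V → V → Prop) (S : Finset V) (C : Finset ι) (x y : V) : Prop :=
  ∃ (p : List V) (cs : List ι),
    p.Nodup ∧ cs.Nodup ∧ cs.length + 1 = p.length ∧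
    p.head? = some x ∧ p.getLast? = some y ∧
    (∀ v ∈ p, v ∈ S) ∧ (∀ c ∈ cs, c ∈ C) ∧
    ∀ k : ℕ, ∀ c ∈ cs[k]?, ∀ u ∈ p[k]?, ∀ w ∈ p[k + 1]?, T c u w

variable {T : ι → V → V → Prop} {S S' : Finset V} {C C' : Finset ι} {x y : V}

theorem RainbowPathIn.mono (h : RainbowPathIn T S C x y) (hS : S ⊆ S') (hC : C ⊆ C') :
    RainbowPathIn T S' C' x y := by
  obtain ⟨p, cs, hp, hcs, hlen, hx, hy, hpS, hcsC, harcs⟩ := h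
  exact ⟨p, cs, hp, hcs, hlen, hx, hy, fun v hv => hS (hpS v hv),
    fun c hc => hC (hcsC c hc), harcs⟩

theorem rainbowPathIn_refl (hx : x ∈ S) : RainbowPathIn T S C x x :=
  ⟨[x], [], by simp, by simp, by simp, by simp, by simp, by simpa, by simp, by simp⟩

theorem RainbowPathIn.cons [DecidableEq V] [DecidableEq ι] {a b : V} {c : ι}
    (h : RainbowPathIn T S C b y) (ha : a ∉ S) (hc : c ∉ C) (hab : T c a b) :
    RainbowPathIn T (insert a S) (insert c C) a y := by
  obtain ⟨p, cs, hp, hcs, hlen, hb, hy, hpS, hcsC, harcs⟩ := h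
  obtain ⟨p, rfl⟩ := List.head?_eq_some_iff.mp hb
  refine ⟨a :: b :: p, c :: cs, ?_, ?_, by simp [hlen], rfl, ?_, ?_, ?_, ?_⟩
  · exact List.nodup_cons.mpr ⟨fun hmem => ha (hpS a hmem), hp⟩
  · exact List.nodup_cons.mpr ⟨fun hmem => hc (hcsC c hmem), hcs⟩
  · simpa [List.getLast?_cons] using hy
  · exact List.forall_mem_cons.mpr
      ⟨Finset.mem_insert_self a S, fun v hv => Finset.mem_insert_of_mem (hpS v hv)⟩
  · exact List.forall_mem_cons.mpr
      ⟨Finset.mem_insert_self c C, fun d hd => Finset.mem_insert_of_mem (hcsC d hd)⟩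
  · rintro (_ | k) d hd u hu w hw
    · simp_all
    · exact harcs k d hd u hu w hw

end RainbowPath

section Growth

variable {V ι : Type*} [Fintype V] [DecidableEq V] [Fintype ι] [DecidableEq ι]
  {T : ι → V → V → Prop}

theorem rainbowPathIn_univ_of_forall_mem {y : V}
    (hreach : ∀ c x, Relation.ReflTransGen (T c) x y) (S : Finset V) (C : Finset ι) (hy : y ∈ S)
    (hcard : Sᶜ.card ≤ Cᶜ.card) (hS : ∀ a ∈ S, RainbowPathIn T S C a y) (x : V) :
    RainbowPathIn T Finset.univ Finset.univ x y := by
  by_cases hx : x ∈ S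
  · exact (hS x hx).mono (Finset.subset_univ _) (Finset.subset_univ _)
  obtain ⟨c, hc⟩ : ∃ c, c ∉ C := by
    have hSc : 0 < Sᶜ.card := Finset.card_pos.mpr ⟨x, Finset.mem_compl.mpr hx⟩
    simpa [Finset.Nonempty] using Finset.card_pos.mp (hSc.trans_le hcard)
  obtain ⟨a, b, ha, hb, hab⟩ := (hreach c x).exists_arc_into (P := (· ∈ S)) hx hy
  have hS' : (insert a S)ᶜ.card + 1 = Sᶜ.card := by
    rw [Finset.compl_insert, Finset.card_erase_add_one (Finset.mem_compl.mpr ha)]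
  have hC' : (insert c C)ᶜ.card + 1 = Cᶜ.card := by
    rw [Finset.compl_insert, Finset.card_erase_add_one (Finset.mem_compl.mpr hc)]
  refine rainbowPathIn_univ_of_forall_mem hreach (insert a S) (insert c C)
    (Finset.mem_insert_of_mem hy) (by omega) (fun v hv => ?_) x
  rcases Finset.mem_insert.mp hv with rfl | hv
  · exact (hS b hb).cons ha hc hab
  · exact (hS v hv).mono (Finset.subset_insert _ _) (Finset.subset_insert _ _)
termination_by Sᶜ.card
decreasing_by omega

end Growth

theorem stmt14_general {V : Type*} [Fintype V] [DecidableEq V] {m : ℕ}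
    (T : Fin m → V → V → Prop)
    (hsc : ∀ c, ∀ x y : V, Relation.ReflTransGen (T c) x y)
    (hm : Fintype.card V - 1 ≤ m) :
    ∀ x y : V, x ≠ y →
      ∃ (p : List V) (cs : List (Fin m)),
        p.Nodup ∧ cs.Nodup ∧ cs.length + 1 = p.length ∧
        p.head? = some x ∧ p.getLast? = some y ∧
        ∀ k : ℕ, ∀ c ∈ cs[k]?, ∀ u ∈ p[k]?, ∀ w ∈ p[k + 1]?, T c u w := by
  intro x y _
  have hcard : ({y} : Finset V)ᶜ.card ≤ (∅ : Finset (Fin m))ᶜ.card := by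
    simpa [Finset.card_compl] using hm
  have hstart : ∀ a ∈ ({y} : Finset V), RainbowPathIn T {y} ∅ a y := by
    simpa using rainbowPathIn_refl (Finset.mem_singleton_self y)
  obtain ⟨p, cs, hp, hcs, hlen, hx, hy, -, -, harcs⟩ :=
    rainbowPathIn_univ_of_forall_mem (fun c a => hsc c a y) {y} ∅
      (Finset.mem_singleton_self y) hcard hstart x
  exact ⟨p, cs, hp, hcs, hlen, hx, hy, harcs⟩

/-- For a collection of `m ≥ |V| - 1 ≥ 1` strongly connected tournaments on a
common vertex set `V`, between any two distinct vertices `x, y` there is a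
rainbow directed path from `x` to `y`. -/
theorem stmt14 {V : Type*} [Fintype V] [DecidableEq V] {m : ℕ}
    (T : Fin m → V → V → Prop) (hT : ∀ c, IsTournament (T c))
    (hsc : ∀ c, ∀ x y : V, Relation.ReflTransGen (T c) x y)
    (hm : Fintype.card V - 1 ≤ m) (hV : 2 ≤ Fintype.card V) :
    ∀ x y : V, x ≠ y →
      ∃ (p : List V) (cs : List (Fin m)),
        p.Nodup ∧ cs.Nodup ∧ cs.length + 1 = p.length ∧
        p.head? = some x ∧ p.getLast? = some y ∧
        ∀ k : ℕ, ∀ c ∈ cs[k]?, ∀ u ∈ p[k]?, ∀ w ∈ p[k + 1]?, T c u w :=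
  stmt14_general T hsc hm
end

section
/- Let T = (T_1, …, T_m) be a collection of tournaments on common vertex set V and let P = u_1 → ⋯ → u_r be a rainbow path of maximum length in T (over all rainbow paths). If r < |V|, then m ≤ r, i.e., the number of unused colors is at most one. Equivalently: if m ≥ |V| then every maximum-length rainbow path is a Hamilton path. -/
/-!
Take a vertex `v` off the path `u₁ → ⋯ → u_r` and two unused colours `a ≠ b`. If one of them
has the arc `v → u₁`, prepend `v`. Otherwise walk along the path while both colours have the
arc `uᵢ → v`: at the first `uᵢ₊₁` such that one of them, say `a`, has `v → uᵢ₊₁`, replace the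
arc `uᵢ → uᵢ₊₁` by `uᵢ →_b v →_a uᵢ₊₁`; if there is no such vertex, append `v` with colour `a`.
Either way the result is a longer rainbow path.
-/

section

variable {ι V : Type*} {T : ι → V → V → Prop}

theorem List.exists_notMem_of_length_lt_card {α : Type*} [Fintype α] (l : List α)
    (h : l.length < Fintype.card α) : ∃ a, a ∉ l :=
  Cardinal.exists_notMem_of_length_lt l (by simpa using h)

theorem IsTournament.rel_of_not_rel_s16 {R : V → V → Prop} (hR : IsTournament R) {u v : V}
    (hne : u ≠ v) (huv : ¬ R u v) : R v u :=
  not_not.mp fun hvu => huv ((hR.2 u v hne).2 hvu)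

-- A rainbow path is a `ColoredPath` whose list of colours is `Nodup`.
inductive ColoredPath_s16 (T : ι → V → V → Prop) : List V → List ι → Prop
  | single (u : V) : ColoredPath_s16 T [u] []
  | cons {u w : V} {p : List V} {c : ι} {cs : List ι} :
      T c u w → ColoredPath_s16 T (w :: p) cs → ColoredPath_s16 T (u :: w :: p) (c :: cs)

theorem coloredPath_iff {p : List V} {cs : List ι} :
    ColoredPath_s16 T p cs ↔ cs.length + 1 = p.length ∧
      ∀ k : ℕ, ∀ c ∈ cs[k]?, ∀ u ∈ p[k]?, ∀ w ∈ p[k + 1]?, T c u w := by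
  induction cs generalizing p with
  | nil =>
    constructor
    · rintro ⟨⟩; simp
    · rintro ⟨hl, -⟩
      obtain ⟨u, rfl⟩ := List.length_eq_one_iff.mp hl.symm
      exact .single u
  | cons c cs ih =>
    match p with
    | [] | [_] => exact ⟨nofun, fun ⟨hl, _⟩ => by simp at hl⟩
    | u :: w :: p =>
      constructor
      · rintro (_ | ⟨huw, hp⟩)
        obtain ⟨hl, hadj⟩ := ih.mp hp
        refine ⟨by simpa using hl, ?_⟩
        rintro (_ | k)
        · simpa using huw
        · exact hadj k
      · rintro ⟨hl, hadj⟩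
        exact .cons (hadj 0 c rfl u rfl w rfl) (ih.mpr ⟨by simpa using hl, fun k => hadj (k + 1)⟩)

theorem ColoredPath_s16.exists_insert_of_rel_head (hT : ∀ c, IsTournament (T c)) {v : V} {c₁ c₂ : ι}
    (hne : c₁ ≠ c₂) {u : V} {p : List V} {cs : List ι} (hp : ColoredPath_s16 T (u :: p) cs)
    (hcs : cs.Nodup) (hv : v ∉ u :: p) (h₁ : c₁ ∉ cs) (h₂ : c₂ ∉ cs)
    (hu₁ : T c₁ u v) (hu₂ : T c₂ u v) :
    ∃ q ds, ColoredPath_s16 T (u :: q) ds ∧ q.Perm (v :: p) ∧ ds.Nodup ∧ ds ⊆ c₁ :: c₂ :: cs := by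
  induction p generalizing u cs with
  | nil =>
    cases hp
    exact ⟨[v], [c₁], .cons hu₁ (.single v), .refl _, by simp, by simp⟩
  | cons w p ih =>
    obtain _ | @⟨_, _, _, c, cs, huw, hp⟩ := hp
    have hvw : v ≠ w := by grind
    by_cases hvw₁ : T c₁ v w
    · exact ⟨v :: w :: p, c₂ :: c₁ :: cs, .cons hu₂ (.cons hvw₁ hp), .refl _, by grind, by grind⟩
    by_cases hvw₂ : T c₂ v w
    · exact ⟨v :: w :: p, c₁ :: c₂ :: cs, .cons hu₁ (.cons hvw₂ hp), .refl _, by grind, by grind⟩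
    obtain ⟨q, ds, hq, hperm, hds, hsub⟩ := ih hp hcs.of_cons (by grind) (by grind) (by grind)
      ((hT c₁).rel_of_not_rel_s16 hvw hvw₁) ((hT c₂).rel_of_not_rel_s16 hvw hvw₂)
    exact ⟨w :: q, c :: ds, .cons huw hq, (hperm.cons w).trans (.swap _ _ _), by grind, by grind⟩

theorem ColoredPath_s16.exists_insert (hT : ∀ c, IsTournament (T c)) {v : V} {c₁ c₂ : ι}
    (hne : c₁ ≠ c₂) {p : List V} {cs : List ι} (hp : ColoredPath_s16 T p cs) (hcs : cs.Nodup)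
    (hv : v ∉ p) (h₁ : c₁ ∉ cs) (h₂ : c₂ ∉ cs) :
    ∃ q ds, ColoredPath_s16 T q ds ∧ q.Perm (v :: p) ∧ ds.Nodup := by
  obtain ⟨u, p, rfl⟩ : ∃ u q, p = u :: q := by cases hp <;> exact ⟨_, _, rfl⟩
  have hvu : v ≠ u := by grind
  have prepend (c : ι) (hc : c ∉ cs) (hvu : T c v u) :
      ∃ q ds, ColoredPath_s16 T q ds ∧ q.Perm (v :: u :: p) ∧ ds.Nodup :=
    ⟨v :: u :: p, c :: cs, .cons hvu hp, .refl _, hcs.cons hc⟩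
  by_cases hvu₁ : T c₁ v u
  · exact prepend c₁ h₁ hvu₁
  by_cases hvu₂ : T c₂ v u
  · exact prepend c₂ h₂ hvu₂
  obtain ⟨q, ds, hq, hperm, hds, -⟩ := hp.exists_insert_of_rel_head hT hne hcs hv h₁ h₂
    ((hT c₁).rel_of_not_rel_s16 hvu hvu₁) ((hT c₂).rel_of_not_rel_s16 hvu hvu₂)
  exact ⟨u :: q, ds, hq, (hperm.cons u).trans (.swap _ _ _), hds⟩

end

theorem stmt16_general {V : Type*} [Fintype V] {m : ℕ}
    (T : Fin m → V → V → Prop) (hT : ∀ c, IsTournament (T c))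
    (p : List V) (cs : List (Fin m))
    (hnd : p.Nodup) (hcnd : cs.Nodup) (hlen : cs.length + 1 = p.length)
    (hadj : ∀ k : ℕ, ∀ c ∈ cs[k]?, ∀ u ∈ p[k]?, ∀ w ∈ p[k + 1]?, T c u w)
    (hmax : ∀ (q : List V) (ds : List (Fin m)),
      q.Nodup → ds.Nodup → ds.length + 1 = q.length →
      (∀ k : ℕ, ∀ c ∈ ds[k]?, ∀ u ∈ q[k]?, ∀ w ∈ q[k + 1]?, T c u w) →
      q.length ≤ p.length) :
    p.length < Fintype.card V → m ≤ p.length := by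
  intro hlt
  by_contra! hm
  obtain ⟨v, hv⟩ := p.exists_notMem_of_length_lt_card hlt
  obtain ⟨c₁, h₁⟩ := cs.exists_notMem_of_length_lt_card (by simp; omega)
  obtain ⟨c₂, h₂⟩ := (c₁ :: cs).exists_notMem_of_length_lt_card (by simp; omega)
  obtain ⟨q, ds, hq, hperm, hds⟩ := (coloredPath_iff.mpr ⟨hlen, hadj⟩).exists_insert hT
    (List.ne_of_not_mem_cons h₂).symm hcnd hv h₁ (List.not_mem_of_not_mem_cons h₂)
  have := hmax q ds (hperm.nodup_iff.mpr (hnd.cons hv)) hds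
    (coloredPath_iff.mp hq).1 (coloredPath_iff.mp hq).2
  simp [hperm.length_eq] at this

/-- If `p` (with colors `cs`) is a rainbow path of maximum length over all
rainbow paths in a collection of `m` tournaments on `V`, and `p` is not a
Hamilton path (its number of vertices is less than `|V|`), then `m ≤ |V(p)|`,
i.e. at most one color is unused. Equivalently, if `m ≥ |V|` then every
maximum-length rainbow path is Hamilton. -/
theorem stmt16 {V : Type*} [Fintype V] [DecidableEq V] {m : ℕ}
    (T : Fin m → V → V → Prop) (hT : ∀ c, IsTournament (T c))
    (p : List V) (cs : List (Fin m))
    (hnd : p.Nodup) (hcnd : cs.Nodup) (hlen : cs.length + 1 = p.length)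
    (hadj : ∀ k : ℕ, ∀ c ∈ cs[k]?, ∀ u ∈ p[k]?, ∀ w ∈ p[k + 1]?, T c u w)
    (hmax : ∀ (q : List V) (ds : List (Fin m)),
      q.Nodup → ds.Nodup → ds.length + 1 = q.length →
      (∀ k : ℕ, ∀ c ∈ ds[k]?, ∀ u ∈ q[k]?, ∀ w ∈ q[k + 1]?, T c u w) →
      q.length ≤ p.length) :
    p.length < Fintype.card V → m ≤ p.length :=
  stmt16_general T hT p cs hnd hcnd hlen hadj hmax
end
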